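/- Let 𝒜 be a central hyperplane arrangement in a finite-dimensional real vector space V and let g : Ch(𝒜) → Ch(𝒜) be a bijection satisfying IIA. If g has a fixed point (i.e. g(c) = c for some chamber c), then g is the identity map of Ch(𝒜). -/

import Mathlib

open Set

section Arrangement

variable {V : Type*} [NormedAddCommGroup V] [NormedSpace ℝ V]

/-- A (linear) hyperplane: the kernel of a nonzero linear functional. -/
def IsHyperplane (H : Submodule ℝ V) : Prop :=
  ∃ f : V →ₗ[ℝ] ℝ, f ≠ 0 ∧ LinearMap.ker f = H

/-- A central hyperplane arrangement: a finite set of linear hyperplanes. -/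
def IsCentralArrangement (𝒜 : Finset (Submodule ℝ V)) : Prop :=
  ∀ H ∈ 𝒜, IsHyperplane H

/-- The complement of the union of the hyperplanes of `𝒜`. -/
def arrComplement (𝒜 : Finset (Submodule ℝ V)) : Set V :=
  {x | ∀ H ∈ 𝒜, x ∉ H}

/-- The set of chambers of `𝒜`: connected components of the complement. -/
def Chambers (𝒜 : Finset (Submodule ℝ V)) : Set (Set V) :=
  {c | ∃ x ∈ arrComplement 𝒜, c = connectedComponentIn (arrComplement 𝒜) x}

/-- A chamber of `𝒜`. -/
abbrev Chamber (𝒜 : Finset (Submodule ℝ V)) := ↥(Chambers 𝒜)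

/-- A chosen point of a chamber. -/
noncomputable def Chamber.pt {𝒜 : Finset (Submodule ℝ V)} (c : Chamber 𝒜) : V :=
  c.2.choose

lemma Chamber.pt_mem {𝒜 : Finset (Submodule ℝ V)} (c : Chamber 𝒜) :
    c.pt ∈ arrComplement 𝒜 := c.2.choose_spec.1

/-- `ε_H` : the chamber of the one-hyperplane arrangement `{H}` containing a
given chamber of `𝒜` (for `H ∈ 𝒜`). -/
noncomputable def epsC {𝒜 : Finset (Submodule ℝ V)} (H : Submodule ℝ V) (hH : H ∈ 𝒜)
    (c : Chamber 𝒜) : Chamber ({H} : Finset (Submodule ℝ V)) :=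
  ⟨connectedComponentIn (arrComplement ({H} : Finset (Submodule ℝ V))) c.pt, by
    refine ⟨c.pt, ?_, rfl⟩
    intro H' hH'
    rw [Finset.mem_singleton] at hH'
    subst hH'
    exact c.pt_mem _ hH⟩

/-- IIA for a map `Ch(𝒜)^m → Ch(𝒜)^l`. -/
def SatisfiesIIA {𝒜 : Finset (Submodule ℝ V)} {m l : ℕ}
    (Φ : (Fin m → Chamber 𝒜) → (Fin l → Chamber 𝒜)) : Prop :=
  ∀ (H : Submodule ℝ V) (hH : H ∈ 𝒜),
    ∃ φ : (Fin m → Chamber ({H} : Finset (Submodule ℝ V))) →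
          (Fin l → Chamber ({H} : Finset (Submodule ℝ V))),
      ∀ c : Fin m → Chamber 𝒜,
        φ (fun i => epsC H hH (c i)) = fun j => epsC H hH (Φ c j)

/-- IIA for a map `Ch(𝒜)^m → Ch(𝒜)`. -/
def SatisfiesIIA1 {𝒜 : Finset (Submodule ℝ V)} {m : ℕ}
    (Φ : (Fin m → Chamber 𝒜) → Chamber 𝒜) : Prop :=
  ∀ (H : Submodule ℝ V) (hH : H ∈ 𝒜),
    ∃ φ : (Fin m → Chamber ({H} : Finset (Submodule ℝ V))) →
          Chamber ({H} : Finset (Submodule ℝ V)),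
      ∀ c : Fin m → Chamber 𝒜,
        φ (fun i => epsC H hH (c i)) = epsC H hH (Φ c)

/-- IIA for a map `Ch(𝒜) → Ch(𝒜)`. -/
def SatisfiesIIAone {𝒜 : Finset (Submodule ℝ V)}
    (f : Chamber 𝒜 → Chamber 𝒜) : Prop :=
  ∀ (H : Submodule ℝ V) (hH : H ∈ 𝒜),
    ∃ φ : Chamber ({H} : Finset (Submodule ℝ V)) → Chamber ({H} : Finset (Submodule ℝ V)),
      ∀ c : Chamber 𝒜, φ (epsC H hH c) = epsC H hH (f c)

/-- Pareto property. -/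
def SatisfiesPAR {𝒜 : Finset (Submodule ℝ V)} {m : ℕ}
    (Φ : (Fin m → Chamber 𝒜) → Chamber 𝒜) : Prop :=
  ∀ c : Chamber 𝒜, Φ (fun _ => c) = c

/-- Admissible map: IIA and PAR. -/
def Admissible {𝒜 : Finset (Submodule ℝ V)} {m : ℕ}
    (Φ : (Fin m → Chamber 𝒜) → Chamber 𝒜) : Prop :=
  SatisfiesIIA1 Φ ∧ SatisfiesPAR Φ

/-- The rank `r(𝒜) = dim V − dim ⋂_{H ∈ 𝒜} H`. -/
noncomputable def arrRank (𝒜 : Finset (Submodule ℝ V)) : ℕ :=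
  Module.finrank ℝ V - Module.finrank ℝ ↥(𝒜.inf id)

/-- Decomposability of a central arrangement. -/
def Decomposable (𝒜 : Finset (Submodule ℝ V)) : Prop :=
  ∃ (n : ℕ) (parts : Fin n → Finset (Submodule ℝ V)),
    2 ≤ n ∧
    (∀ i, (parts i).Nonempty) ∧
    (∀ i j H, H ∈ parts i → H ∈ parts j → i = j) ∧
    (∀ H, H ∈ 𝒜 ↔ ∃ i, H ∈ parts i) ∧
    arrRank 𝒜 = ∑ i, arrRank (parts i)

/-- A dependent subarrangement: `r(ℬ) < |ℬ|`. -/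
def Dependent (ℬ : Finset (Submodule ℝ V)) : Prop := arrRank ℬ < ℬ.card

/-- A circuit: a minimal dependent subarrangement. -/
def IsCircuit (ℬ : Finset (Submodule ℝ V)) : Prop :=
  Dependent ℬ ∧ ∀ ℬ' ⊆ ℬ, Dependent ℬ' → ℬ' = ℬ

/-- The graph `Γ(𝒜)`: vertices are the hyperplanes of `𝒜`, with an edge between two
distinct hyperplanes iff some circuit of `𝒜` contains both. -/
def circuitGraph (𝒜 : Finset (Submodule ℝ V)) : SimpleGraph {H // H ∈ 𝒜} where
  Adj H H' := H ≠ H' ∧ ∃ ℬ ⊆ 𝒜, IsCircuit ℬ ∧ H.1 ∈ ℬ ∧ H'.1 ∈ ℬ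
  symm := by
    refine ⟨?_⟩
    rintro a b ⟨hne, ℬ, hsub, hcirc, ha, hb⟩
    exact ⟨hne.symm, ℬ, hsub, hcirc, hb, ha⟩
  loopless := by
    refine ⟨?_⟩
    rintro a ⟨h, -⟩
    exact h rfl

/-- `H` separates a set `T ⊆ Ch(𝒜)^m` if the image of `T` under `(ε_H)^m` has at
least two elements. -/
def SeparationOf {𝒜 : Finset (Submodule ℝ V)} {m : ℕ} (H : Submodule ℝ V) (hH : H ∈ 𝒜)
    (T : Set (Fin m → Chamber 𝒜)) : Prop :=
  ∃ t₁ ∈ T, ∃ t₂ ∈ T,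
    (fun i => epsC H hH (t₁ i)) ≠ (fun i => epsC H hH (t₂ i))

end Arrangement

/-!
Each `ε_H` takes only two values, the two sides of `H`. IIA makes `ε_H ∘ g = φ_H ∘ ε_H`, and
since `g` is onto, `φ_H` permutes these (at most) two values; it fixes the side of the fixed
chamber, hence fixes both. So `g c` and `c` lie on the same side of every hyperplane of `𝒜`, and
the segment between their points then stays in the complement, forcing `g c = c`.
-/

theorem Function.Semiconj.apply_eq_of_isFixedPt {X Y : Type*} {e : X → Y} {g : X → X}
    {φ : Y → Y} (h : Function.Semiconj e g φ) (hg : Function.Surjective g) {x₀ : X}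
    (hx₀ : Function.IsFixedPt g x₀) (htwo : ∀ x y z, e x = e y ∨ e x = e z ∨ e y = e z)
    (x : X) : e (g x) = e x := by
  have hφ₀ : φ (e x₀) = e x₀ := by rw [← h, hx₀]
  by_cases hx : e x = e x₀
  · rw [h, hx, hφ₀]
  obtain ⟨x', rfl⟩ := hg x
  have hx' : e x' ≠ e x₀ := fun hx' => hx (by rw [h, hx', hφ₀])
  -- pigeonhole: `e` takes at most two values and neither `e x'` nor `e (g x')` is `e x₀`
  have hsame : e x' = e (g x') := by
    have := htwo x' (g x') x₀
    tauto
  rw [h, ← hsame, ← h, hsame]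

section Arrangement

variable {V : Type*} [NormedAddCommGroup V] [NormedSpace ℝ V]

theorem arrComplement_singleton {H : Submodule ℝ V} {f : V →ₗ[ℝ] ℝ}
    (hker : LinearMap.ker f = H) :
    arrComplement ({H} : Finset (Submodule ℝ V)) = {z | f z ≠ 0} := by
  ext z
  simp [arrComplement, ← hker]

theorem Chamber.apply_pt_ne_zero {𝒜 : Finset (Submodule ℝ V)} {H : Submodule ℝ V}
    (hH : H ∈ 𝒜) {f : V →ₗ[ℝ] ℝ} (hker : LinearMap.ker f = H) (c : Chamber 𝒜) :
    f c.pt ≠ 0 := fun h => c.pt_mem H hH (hker ▸ LinearMap.mem_ker.mpr h)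

theorem Chamber.eq_connectedComponentIn_pt {𝒜 : Finset (Submodule ℝ V)} (c : Chamber 𝒜) :
    c.1 = connectedComponentIn (arrComplement 𝒜) c.pt :=
  c.2.choose_spec.2

theorem LinearMap.apply_ne_zero_of_mem_segment (f : V →ₗ[ℝ] ℝ) {x y z : V} (hx : f x ≠ 0)
    (hy : f y ≠ 0) (hxy : 0 < f x ↔ 0 < f y) (hz : z ∈ segment ℝ x y) : f z ≠ 0 := by
  rcases hx.lt_or_gt with hx | hx
  · have hy : f y < 0 := hy.lt_of_le (not_lt.mp fun h => hx.not_gt (hxy.mpr h))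
    exact (((convex_Iio 0).linear_preimage f).segment_subset hx hy hz).ne
  · exact (((convex_Ioi 0).linear_preimage f).segment_subset hx (hxy.mp hx) hz).ne'

variable [FiniteDimensional ℝ V]

theorem LinearMap.pos_iff_pos_of_mem_connectedComponentIn (f : V →ₗ[ℝ] ℝ) {x y : V}
    (hy : y ∈ connectedComponentIn {z | f z ≠ 0} x) : 0 < f x ↔ 0 < f y := by
  set C := connectedComponentIn {z | f z ≠ 0} x
  have hx : x ∈ C := mem_connectedComponentIn (connectedComponentIn_nonempty_iff.mp ⟨y, hy⟩)
  have hC : ∀ a ∈ C, ∀ b ∈ C, f a ≤ 0 → f b ≤ 0 := by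
    intro a ha b hb hfa
    by_contra! hfb
    obtain ⟨z, hzC, hz⟩ := isPreconnected_connectedComponentIn.intermediate_value ha hb
      f.continuous_of_finiteDimensional.continuousOn ⟨hfa, hfb.le⟩
    exact connectedComponentIn_subset _ _ hzC hz
  exact ⟨fun h => not_le.mp fun hy' => h.not_ge (hC y hy x hx hy'),
    fun h => not_le.mp fun hx' => h.not_ge (hC x hx y hy hx')⟩

theorem epsC_eq_iff {𝒜 : Finset (Submodule ℝ V)} {H : Submodule ℝ V} (hH : H ∈ 𝒜)
    {f : V →ₗ[ℝ] ℝ} (hker : LinearMap.ker f = H) (c c' : Chamber 𝒜) :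
    epsC H hH c = epsC H hH c' ↔ (0 < f c.pt ↔ 0 < f c'.pt) := by
  have hc := c.apply_pt_ne_zero hH hker
  have hc' := c'.apply_pt_ne_zero hH hker
  rw [Subtype.ext_iff]
  change connectedComponentIn _ c.pt = connectedComponentIn _ c'.pt ↔ _
  rw [arrComplement_singleton hker]
  constructor
  · intro h
    refine f.pos_iff_pos_of_mem_connectedComponentIn ?_
    exact h ▸ mem_connectedComponentIn hc'
  · intro h
    refine connectedComponentIn_eq ((convex_segment _ _).isPreconnected.subset_connectedComponentIn
      (left_mem_segment ℝ _ _) ?_ (right_mem_segment ℝ _ _))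
    exact fun z hz => f.apply_ne_zero_of_mem_segment hc hc' h hz

theorem epsC_eq_or_eq_or_eq {𝒜 : Finset (Submodule ℝ V)} {H : Submodule ℝ V} (hH : H ∈ 𝒜)
    (hhyp : IsHyperplane H) (c₁ c₂ c₃ : Chamber 𝒜) :
    epsC H hH c₁ = epsC H hH c₂ ∨ epsC H hH c₁ = epsC H hH c₃ ∨
      epsC H hH c₂ = epsC H hH c₃ := by
  obtain ⟨f, -, hker⟩ := hhyp
  simp only [epsC_eq_iff hH hker]
  tauto

theorem Chamber.ext_of_epsC_eq {𝒜 : Finset (Submodule ℝ V)} (h𝒜 : IsCentralArrangement 𝒜)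
    {c c' : Chamber 𝒜} (h : ∀ H (hH : H ∈ 𝒜), epsC H hH c = epsC H hH c') : c = c' := by
  have hseg : segment ℝ c.pt c'.pt ⊆ arrComplement 𝒜 := by
    intro z hz H hH hzH
    obtain ⟨f, -, hker⟩ := h𝒜 H hH
    refine f.apply_ne_zero_of_mem_segment (c.apply_pt_ne_zero hH hker)
      (c'.apply_pt_ne_zero hH hker) ((epsC_eq_iff hH hker c c').mp (h H hH)) hz ?_
    exact LinearMap.mem_ker.mp (hker ▸ hzH)
  have hmem : c'.pt ∈ connectedComponentIn (arrComplement 𝒜) c.pt :=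
    (convex_segment _ _).isPreconnected.subset_connectedComponentIn (left_mem_segment ℝ _ _) hseg
      (right_mem_segment ℝ _ _)
  apply Subtype.ext
  rw [c.eq_connectedComponentIn_pt, c'.eq_connectedComponentIn_pt, connectedComponentIn_eq hmem]

end Arrangement

/-- A bijection `g : Ch(𝒜) → Ch(𝒜)` satisfying IIA which has a fixed point is
the identity. -/
theorem bijective_IIA_fixed_point_eq_id
    {V : Type*} [NormedAddCommGroup V] [NormedSpace ℝ V] [FiniteDimensional ℝ V]
    (𝒜 : Finset (Submodule ℝ V)) (h𝒜 : IsCentralArrangement 𝒜)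
    (g : Chamber 𝒜 → Chamber 𝒜) (hbij : Function.Bijective g)
    (hIIA : SatisfiesIIAone g) (hfix : ∃ c : Chamber 𝒜, g c = c) :
    g = id := by
  obtain ⟨c₀, hc₀⟩ := hfix
  funext c
  refine Chamber.ext_of_epsC_eq h𝒜 fun H hH => ?_
  obtain ⟨φ, hφ⟩ := hIIA H hH
  have hsemi : Function.Semiconj (epsC H hH) g φ := fun c => (hφ c).symm
  exact hsemi.apply_eq_of_isFixedPt hbij.2 hc₀ (epsC_eq_or_eq_or_eq hH (h𝒜 H hH)) c
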